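/- Let (μ_t)_{t≥0} be WDS ordered with negative means and τ₀ < τ₁ < ⋯ < τ_r nonnegative reals. Define μ^{(τ)}_t = μ_t for t ∉ [τ₀, τ_r], and μ^{(τ)}_t = ((τ_i − t)/(τ_i − τ_{i−1})) μ_{τ_{i−1}} + ((t − τ_{i−1})/(τ_i − τ_{i−1})) μ_{τ_i} for t ∈ [τ_{i−1}, τ_i]. Then (μ^{(τ)}_t)_{t≥0} is WDS ordered. -/

import Mathlib

/-!
Write `psiWds μ x = N_μ(x) / D_μ(x)` with `N_μ(x) = ∫_{[x,∞)} y dμ - mean μ` and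
`D_μ(x) = μ [x, ∞)`; the quotient is replaced by `⊤` exactly where `μ (x, ∞) = 0`.
If `ψ_{ρ₀} ≤ ψ_{ρ₁}` and `ρ₁` has mean `≤ 0`, then `N₀ D₁ ≤ N₁ D₀` at every `x` (the TP₂ property):
where `ρ₁` charges `(x, ∞)` this is the hypothesis, at an atom at the right end of the support of
`ρ₁` it follows by letting `y ↑ x`, and beyond that `D₁ = 0` while `N₁ = -mean ρ₁ ≥ 0`.
Since `N` and `D` are affine along the segment `(1 - p) ρ₀ + p ρ₁`, the TP₂ inequality makes `ψ`
of the mixture increase with `p`. The interpolated family is therefore monotone on each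
`[τ_i, τ_{i+1}]`; it agrees with `μ` at the knots and off `[τ₀, τ_r]`, so the pieces glue together.
-/

open MeasureTheory Set Filter

noncomputable def meanM (μ : Measure ℝ) : ℝ := ∫ y, y ∂μ

noncomputable def rSupE (μ : Measure ℝ) : EReal :=
  sInf ((fun z : ℝ => (z : EReal)) '' {z : ℝ | μ (Ici z) = 0})

noncomputable def psiWds (μ : Measure ℝ) (x : ℝ) : EReal :=
  if (x : EReal) < rSupE μ then
    ((((∫ y in Ici x, y ∂μ) - meanM μ) / (μ (Ici x)).toReal : ℝ) : EReal)
  else ⊤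

noncomputable def Kfun (μ : Measure ℝ) (x : ℝ) : ℝ :=
  (∫ y in Ici x, (y - x) ∂μ) - meanM μ

open Topology

theorem monotoneOn_Ici_of_eq_off_pieces {α β : Type*} [LinearOrder α] [Preorder β]
    {f g : α → β} {a : α} {τ : ℕ → α} {r : ℕ} (hf : MonotoneOn f (Ici a)) (ha : a ≤ τ 0)
    (hτ : ∀ i < r, τ i ≤ τ (i + 1)) (hgf : ∀ t, a ≤ t → t ∉ Icc (τ 0) (τ r) → g t = f t)
    (hgf₀ : g (τ 0) = f (τ 0)) (hgfr : g (τ r) = f (τ r))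
    (hpiece : ∀ i < r, MonotoneOn g (Icc (τ i) (τ (i + 1)))) :
    MonotoneOn g (Ici a) := by
  have hupto : ∀ k ≤ r, a ≤ τ k ∧ MonotoneOn g (Icc a (τ k)) := by
    intro k hk
    induction k with
    | zero =>
      refine ⟨ha, (hf.mono Icc_subset_Ici_self).congr fun t ht => ?_⟩
      rcases ht.2.lt_or_eq with hlt | rfl
      exacts [(hgf t ht.1 fun h => hlt.not_ge h.1).symm, hgf₀.symm]
    | succ k ih =>
      obtain ⟨hak, hmono⟩ := ih (by omega)
      have hk' := hτ k (by omega)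
      refine ⟨hak.trans hk', ?_⟩
      rw [← Icc_union_Icc_eq_Icc hak hk']
      exact hmono.union_right (hpiece k (by omega)) (isGreatest_Icc hak) (isLeast_Icc hk')
  obtain ⟨har, hmono⟩ := hupto r le_rfl
  have hright : MonotoneOn g (Ici (τ r)) := by
    refine (hf.mono (Ici_subset_Ici.2 har)).congr fun t ht => ?_
    rcases (mem_Ici.1 ht).eq_or_lt with rfl | hlt
    exacts [hgfr.symm, (hgf t (har.trans ht) fun h => hlt.not_ge h.2).symm]
  rw [← Icc_union_Ici_eq_Ici har]
  exact hmono.union_right hright (isGreatest_Icc har) isLeast_Ici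

theorem iInter_Ici_eq_Ici_of_tendsto {u : ℕ → ℝ} {x : ℝ} (hu : ∀ n, u n ≤ x)
    (hlim : Tendsto u atTop (𝓝 x)) : ⋂ n, Ici (u n) = Ici x := by
  ext y
  simp only [mem_iInter, mem_Ici]
  exact ⟨fun h => le_of_tendsto' hlim h, fun h n => (hu n).trans h⟩

theorem tendsto_setIntegral_Ici_of_tendsto {μ : Measure ℝ} {f : ℝ → ℝ} (hf : Integrable f μ)
    {u : ℕ → ℝ} {x : ℝ} (hu_mono : Monotone u) (hu : ∀ n, u n ≤ x)
    (hlim : Tendsto u atTop (𝓝 x)) :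
    Tendsto (fun n => ∫ y in Ici (u n), f y ∂μ) atTop (𝓝 (∫ y in Ici x, f y ∂μ)) := by
  have h := tendsto_setIntegral_of_antitone (μ := μ) (fun n => measurableSet_Ici)
    (fun _ _ hmn => Ici_subset_Ici.2 (hu_mono hmn)) ⟨0, hf.integrableOn⟩
  rwa [iInter_Ici_eq_Ici_of_tendsto hu hlim] at h

theorem rSupE_le_of_measure_Ioi_eq_zero {μ : Measure ℝ} {x : ℝ} (h : μ (Ioi x) = 0) :
    rSupE μ ≤ x :=
  EReal.le_of_forall_lt_iff_le.1 fun z hz =>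
    sInf_le ⟨z, measure_mono_null (Ici_subset_Ioi.2 (EReal.coe_lt_coe_iff.1 hz)) h, rfl⟩

theorem le_rSupE_of_measure_Ici_ne_zero {μ : Measure ℝ} {x : ℝ} (h : μ (Ici x) ≠ 0) :
    (x : EReal) ≤ rSupE μ := by
  refine le_sInf ?_
  rintro _ ⟨z, hz, rfl⟩
  by_contra! hzx
  exact h (measure_mono_null (Ici_subset_Ici.2 (EReal.coe_lt_coe_iff.1 hzx).le) hz)

theorem coe_lt_rSupE_iff {μ : Measure ℝ} {x : ℝ} : (x : EReal) < rSupE μ ↔ μ (Ioi x) ≠ 0 := by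
  refine ⟨fun hx h => (rSupE_le_of_measure_Ioi_eq_zero h).not_gt hx, fun hx => ?_⟩
  obtain ⟨z, hxz, hz⟩ : ∃ z, x < z ∧ μ (Ici z) ≠ 0 := by
    by_contra! h
    obtain ⟨u, -, hu, hlim⟩ := exists_seq_strictAnti_tendsto x
    refine hx (measure_mono_null ?_ (measure_iUnion_null fun n => h (u n) (hu n)))
    rw [iUnion_Ici_eq_Ioi_of_lt_of_tendsto hu hlim]
  exact (EReal.coe_lt_coe_iff.2 hxz).trans_le (le_rSupE_of_measure_Ici_ne_zero hz)

noncomputable def psiNum (μ : Measure ℝ) (x : ℝ) : ℝ := (∫ y in Ici x, y ∂μ) - meanM μ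

theorem psiWds_of_measure_Ioi_eq_zero {μ : Measure ℝ} {x : ℝ} (h : μ (Ioi x) = 0) :
    psiWds μ x = ⊤ :=
  if_neg fun hx => coe_lt_rSupE_iff.1 hx h

theorem psiWds_of_measure_Ioi_ne_zero {μ : Measure ℝ} {x : ℝ} (h : μ (Ioi x) ≠ 0) :
    psiWds μ x = ((psiNum μ x / μ.real (Ici x) : ℝ) : EReal) :=
  if_pos (coe_lt_rSupE_iff.2 h)

theorem measureReal_Ici_pos {μ : Measure ℝ} [IsFiniteMeasure μ] {x : ℝ} (h : μ (Ioi x) ≠ 0) :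
    0 < μ.real (Ici x) :=
  ENNReal.toReal_pos (fun h0 => h (measure_mono_null Ioi_subset_Ici_self h0)) (measure_ne_top _ _)

theorem measure_Ioi_ne_zero_of_psiWds_le {ρ₀ ρ₁ : Measure ℝ} {x : ℝ}
    (h : psiWds ρ₀ x ≤ psiWds ρ₁ x) (h₁ : ρ₁ (Ioi x) ≠ 0) : ρ₀ (Ioi x) ≠ 0 := by
  intro h₀
  rw [psiWds_of_measure_Ioi_eq_zero h₀, psiWds_of_measure_Ioi_ne_zero h₁, top_le_iff] at h
  exact EReal.coe_ne_top _ h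

theorem psiWds_le_psiWds_iff {ρ₀ ρ₁ : Measure ℝ} [IsFiniteMeasure ρ₀] [IsFiniteMeasure ρ₁]
    {x : ℝ} (h₀ : ρ₀ (Ioi x) ≠ 0) (h₁ : ρ₁ (Ioi x) ≠ 0) :
    psiWds ρ₀ x ≤ psiWds ρ₁ x ↔
      psiNum ρ₀ x * ρ₁.real (Ici x) ≤ psiNum ρ₁ x * ρ₀.real (Ici x) := by
  rw [psiWds_of_measure_Ioi_ne_zero h₀, psiWds_of_measure_Ioi_ne_zero h₁, EReal.coe_le_coe_iff,
    div_le_div_iff₀ (measureReal_Ici_pos h₀) (measureReal_Ici_pos h₁)]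

theorem psiNum_mul_le_of_psiWds_le {ρ₀ ρ₁ : Measure ℝ} [IsFiniteMeasure ρ₀] [IsFiniteMeasure ρ₁]
    (hi₀ : Integrable (fun y : ℝ => y) ρ₀) (hi₁ : Integrable (fun y : ℝ => y) ρ₁)
    (hm₁ : meanM ρ₁ ≤ 0) (h : psiWds ρ₀ ≤ psiWds ρ₁) (x : ℝ) :
    psiNum ρ₀ x * ρ₁.real (Ici x) ≤ psiNum ρ₁ x * ρ₀.real (Ici x) := by
  by_cases hx : ρ₁ (Ici x) = 0
  · have hnum : psiNum ρ₁ x = -meanM ρ₁ := by simp [psiNum, Measure.restrict_eq_zero.2 hx]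
    rw [measureReal_def, hx, hnum, ENNReal.toReal_zero, mul_zero]
    exact mul_nonneg (neg_nonneg.2 hm₁) measureReal_nonneg
  obtain ⟨u, hu_mono, hu, hlim⟩ := exists_seq_strictMono_tendsto x
  have hnum : ∀ ρ : Measure ℝ, Integrable (fun y : ℝ => y) ρ →
      Tendsto (fun n => psiNum ρ (u n)) atTop (𝓝 (psiNum ρ x)) := fun ρ hi =>
    (tendsto_setIntegral_Ici_of_tendsto hi hu_mono.monotone (fun n => (hu n).le) hlim).sub_const _
  have hden : ∀ ρ : Measure ℝ, [IsFiniteMeasure ρ] →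
      Tendsto (fun n => ρ.real (Ici (u n))) atTop (𝓝 (ρ.real (Ici x))) := fun ρ _ => by
    simpa using tendsto_setIntegral_Ici_of_tendsto (integrable_const (1 : ℝ) (μ := ρ))
      hu_mono.monotone (fun n => (hu n).le) hlim
  refine le_of_tendsto_of_tendsto' ((hnum ρ₀ hi₀).mul (hden ρ₁)) ((hnum ρ₁ hi₁).mul (hden ρ₀))
    fun n => ?_
  have h₁ : ρ₁ (Ioi (u n)) ≠ 0 := fun h0 => hx (measure_mono_null (Ici_subset_Ioi.2 (hu n)) h0)
  exact (psiWds_le_psiWds_iff (measure_Ioi_ne_zero_of_psiWds_le (h (u n)) h₁) h₁).1 (h (u n))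

noncomputable def mix (p : ℝ) (ρ₀ ρ₁ : Measure ℝ) : Measure ℝ :=
  ENNReal.ofReal (1 - p) • ρ₀ + ENNReal.ofReal p • ρ₁

section Mix

variable {p : ℝ} {ρ₀ ρ₁ : Measure ℝ}

theorem mix_apply (s : Set ℝ) :
    mix p ρ₀ ρ₁ s = ENNReal.ofReal (1 - p) * ρ₀ s + ENNReal.ofReal p * ρ₁ s := by
  simp [mix]

instance [IsFiniteMeasure ρ₀] [IsFiniteMeasure ρ₁] : IsFiniteMeasure (mix p ρ₀ ρ₁) :=
  have := ρ₀.smul_finite (ENNReal.ofReal_ne_top (r := 1 - p))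
  have := ρ₁.smul_finite (ENNReal.ofReal_ne_top (r := p))
  inferInstanceAs (IsFiniteMeasure (_ + _))

theorem measureReal_mix [IsFiniteMeasure ρ₀] [IsFiniteMeasure ρ₁] (hp : p ∈ Icc 0 1)
    (s : Set ℝ) : (mix p ρ₀ ρ₁).real s = (1 - p) * ρ₀.real s + p * ρ₁.real s := by
  rw [measureReal_def, mix_apply, ENNReal.toReal_add (by finiteness) (by finiteness),
    ENNReal.toReal_mul, ENNReal.toReal_mul, ENNReal.toReal_ofReal (sub_nonneg.2 hp.2),
    ENNReal.toReal_ofReal hp.1, measureReal_def, measureReal_def]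

theorem integral_mix (hp : p ∈ Icc 0 1) {f : ℝ → ℝ} (h₀ : Integrable f ρ₀)
    (h₁ : Integrable f ρ₁) :
    ∫ y, f y ∂(mix p ρ₀ ρ₁) = (1 - p) * ∫ y, f y ∂ρ₀ + p * ∫ y, f y ∂ρ₁ := by
  rw [mix, integral_add_measure (h₀.smul_measure ENNReal.ofReal_ne_top)
      (h₁.smul_measure ENNReal.ofReal_ne_top), integral_smul_measure, integral_smul_measure,
    ENNReal.toReal_ofReal (sub_nonneg.2 hp.2), ENNReal.toReal_ofReal hp.1, smul_eq_mul, smul_eq_mul]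

theorem restrict_mix (s : Set ℝ) :
    (mix p ρ₀ ρ₁).restrict s = mix p (ρ₀.restrict s) (ρ₁.restrict s) := by
  simp [mix, Measure.restrict_add, Measure.restrict_smul]

theorem psiNum_mix (hp : p ∈ Icc 0 1) (hi₀ : Integrable (fun y : ℝ => y) ρ₀)
    (hi₁ : Integrable (fun y : ℝ => y) ρ₁) (x : ℝ) :
    psiNum (mix p ρ₀ ρ₁) x = (1 - p) * psiNum ρ₀ x + p * psiNum ρ₁ x := by
  rw [psiNum, psiNum, psiNum, meanM, meanM, meanM, restrict_mix,
    integral_mix hp hi₀.integrableOn hi₁.integrableOn, integral_mix hp hi₀ hi₁]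
  ring

theorem mix_apply_ne_zero_of_le {p' : ℝ} {s : Set ℝ} (h : ρ₁ s ≠ 0 → ρ₀ s ≠ 0) (hpp' : p ≤ p')
    (hs : mix p' ρ₀ ρ₁ s ≠ 0) : mix p ρ₀ ρ₁ s ≠ 0 := by
  contrapose! hs
  simp only [mix_apply, add_eq_zero, mul_eq_zero, ENNReal.ofReal_eq_zero, sub_nonpos] at hs ⊢
  rcases hs with ⟨hp | hs₀, hs₁⟩
  · exact ⟨Or.inl (hp.trans hpp'), Or.inr (hs₁.resolve_left (by linarith))⟩
  · exact ⟨Or.inr hs₀, Or.inr (not_imp_not.1 h hs₀)⟩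

end Mix

section Interpolation

variable {ρ₀ ρ₁ : Measure ℝ} [IsFiniteMeasure ρ₀] [IsFiniteMeasure ρ₁]

theorem monotoneOn_psiWds_mix (hi₀ : Integrable (fun y : ℝ => y) ρ₀)
    (hi₁ : Integrable (fun y : ℝ => y) ρ₁) (hm₁ : meanM ρ₁ ≤ 0) (h : psiWds ρ₀ ≤ psiWds ρ₁) :
    MonotoneOn (fun p => psiWds (mix p ρ₀ ρ₁)) (Icc 0 1) := by
  intro p hp p' hp' hpp' x
  by_cases hx' : mix p' ρ₀ ρ₁ (Ioi x) = 0
  · simp [psiWds_of_measure_Ioi_eq_zero hx']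
  have hx := mix_apply_ne_zero_of_le (measure_Ioi_ne_zero_of_psiWds_le (h x)) hpp' hx'
  rw [psiWds_le_psiWds_iff hx hx', psiNum_mix hp hi₀ hi₁, psiNum_mix hp' hi₀ hi₁,
    measureReal_mix hp, measureReal_mix hp']
  -- `N_p D_{p'} - N_{p'} D_p = (p' - p) (N₀ D₁ - N₁ D₀)`
  nlinarith [mul_le_mul_of_nonneg_left (psiNum_mul_le_of_psiWds_le hi₀ hi₁ hm₁ h x)
    (sub_nonneg.2 hpp')]

theorem monotoneOn_psiWds_interpolation (hi₀ : Integrable (fun y : ℝ => y) ρ₀)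
    (hi₁ : Integrable (fun y : ℝ => y) ρ₁) (hm₁ : meanM ρ₁ ≤ 0) (h : psiWds ρ₀ ≤ psiWds ρ₁)
    {a b : ℝ} (hab : a < b) :
    MonotoneOn (fun t => psiWds (ENNReal.ofReal ((b - t) / (b - a)) • ρ₀
      + ENNReal.ofReal ((t - a) / (b - a)) • ρ₁)) (Icc a b) := by
  have hba : 0 < b - a := sub_pos.2 hab
  have hweight : MonotoneOn (fun t => (t - a) / (b - a)) (Icc a b) := fun s _ t _ hst => by
    dsimp only
    gcongr
  have hmaps : MapsTo (fun t => (t - a) / (b - a)) (Icc a b) (Icc 0 1) := fun t ht =>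
    ⟨div_nonneg (sub_nonneg.2 ht.1) hba.le, (div_le_one hba).2 (by linarith [ht.2])⟩
  refine ((monotoneOn_psiWds_mix hi₀ hi₁ hm₁ h).comp hweight hmaps).congr fun t _ => ?_
  have : 1 - (t - a) / (b - a) = (b - t) / (b - a) := by field_simp; ring
  simp only [Function.comp, mix, this]

end Interpolation

theorem stmt14 (μ : ℝ → Measure ℝ)
    (hprob : ∀ t, 0 ≤ t → IsProbabilityMeasure (μ t))
    (hint : ∀ t, 0 ≤ t → Integrable (fun y : ℝ => y) (μ t))
    (hneg : ∀ t, 0 ≤ t → meanM (μ t) < 0)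
    (hwds : ∀ s t, 0 ≤ s → s ≤ t → ∀ x : ℝ, psiWds (μ s) x ≤ psiWds (μ t) x)
    (r : ℕ) (hr : 0 < r) (τ : ℕ → ℝ) (hτ0 : 0 ≤ τ 0)
    (hτmono : ∀ i < r, τ i < τ (i + 1))
    (ν : ℝ → Measure ℝ)
    (hν₁ : ∀ t, 0 ≤ t → t ∉ Icc (τ 0) (τ r) → ν t = μ t)
    (hν₂ : ∀ i < r, ∀ t ∈ Icc (τ i) (τ (i + 1)),
      ν t = ENNReal.ofReal ((τ (i + 1) - t) / (τ (i + 1) - τ i)) • μ (τ i)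
        + ENNReal.ofReal ((t - τ i) / (τ (i + 1) - τ i)) • μ (τ (i + 1))) :
    ∀ s t, 0 ≤ s → s ≤ t → ∀ x : ℝ, psiWds (ν s) x ≤ psiWds (ν t) x := by
  have hτ_nonneg : ∀ i ≤ r, 0 ≤ τ i := by
    intro i hi
    induction i with
    | zero => exact hτ0
    | succ i ih => exact (ih (by omega)).trans (hτmono i (by omega)).le
  have hpiece : ∀ i < r, MonotoneOn (fun t => psiWds (ν t)) (Icc (τ i) (τ (i + 1))) := by
    intro i hi
    have h₀ := hτ_nonneg i hi.le
    have h₁ := hτ_nonneg (i + 1) hi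
    have := hprob _ h₀
    have := hprob _ h₁
    exact (monotoneOn_psiWds_interpolation (hint _ h₀) (hint _ h₁) (hneg _ h₁).le
      (hwds _ _ h₀ (hτmono i hi).le) (hτmono i hi)).congr fun t ht =>
        (congrArg psiWds (hν₂ i hi t ht)).symm
  have hν_left : ν (τ 0) = μ (τ 0) := by
    have hlen := hτmono 0 hr
    simpa [(sub_pos.2 hlen).ne'] using hν₂ 0 hr (τ 0) ⟨le_rfl, hlen.le⟩
  have hν_right : ν (τ r) = μ (τ r) := by
    obtain ⟨k, rfl⟩ := Nat.exists_eq_add_one_of_ne_zero hr.ne'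
    have hlen := hτmono k (by omega)
    simpa [(sub_pos.2 hlen).ne'] using hν₂ k (by omega) (τ (k + 1)) ⟨hlen.le, le_rfl⟩
  intro s t hs hst
  exact monotoneOn_Ici_of_eq_off_pieces (f := fun t => psiWds (μ t))
    (fun s hs t _ hst => hwds s t hs hst) hτ0 (fun i hi => (hτmono i hi).le)
    (fun t ht htI => congrArg psiWds (hν₁ t ht htI)) (congrArg psiWds hν_left)
    (congrArg psiWds hν_right) hpiece hs (hs.trans hst) hst
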